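/- arXiv:2011.06460 — 3 statements merged into one kernel-verified Lean document; each statement's English description precedes it below -/
import Mathlib

section
/- For real γ ≠ 0 and h > 0, the two coefficients a₀ = sinh((3/4)γh)/sinh(γh) and a₋₂ = sinh((1/4)γh)/sinh(γh) satisfy the reproduction property a₀·exp(γ(t₀ - t̄)) + a₋₂·exp(γ(t₁ - t̄)) = 1 and a₀·exp(-γ(t₀ - t̄)) + a₋₂·exp(-γ(t₁ - t̄)) = 1, where t₀, t₁ = t₀ + h are grid points and t̄ = t₀ + h/4 is the evaluation point. -/
/-! With `x = γh/4` the two nodes sit at `t₀ - t̄ = -x/γ` and `t₁ - t̄ = 3x/γ`, and both identities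
are instances of `sinh a · e^{-b} + sinh b · e^{a} = sinh (a + b)`, divided by `sinh (a + b) = sinh (γh)`:
the first with `(a, b) = (3x, x)`, the second with `(a, b) = (x, 3x)`. -/

open Real

theorem Real.sinh_mul_exp_neg_add_sinh_mul_exp (a b : ℝ) :
    sinh a * exp (-b) + sinh b * exp a = sinh (a + b) := by
  rw [sinh_add, ← cosh_sub_sinh, ← cosh_add_sinh]
  ring

theorem Real.sinh_div_mul_exp_neg_add_sinh_div_mul_exp {a b : ℝ} (hab : sinh (a + b) ≠ 0) :
    sinh a / sinh (a + b) * exp (-b) + sinh b / sinh (a + b) * exp a = 1 := by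
  rw [div_mul_eq_mul_div, div_mul_eq_mul_div, ← add_div, sinh_mul_exp_neg_add_sinh_mul_exp,
    div_self hab]

theorem nucc_even_mask_reproduces_exponentials
    (γ h t₀ : ℝ) (hγ : γ ≠ 0) (hh : 0 < h)
    (t₁ : ℝ) (ht₁ : t₁ = t₀ + h) (tb : ℝ) (htb : tb = t₀ + h / 4)
    (a₀ a₂ : ℝ)
    (ha₀ : a₀ = Real.sinh ((3 / 4) * γ * h) / Real.sinh (γ * h))
    (ha₂ : a₂ = Real.sinh ((1 / 4) * γ * h) / Real.sinh (γ * h)) :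
    a₀ * Real.exp (γ * (t₀ - tb)) + a₂ * Real.exp (γ * (t₁ - tb)) = 1 ∧
    a₀ * Real.exp (-γ * (t₀ - tb)) + a₂ * Real.exp (-γ * (t₁ - tb)) = 1 := by
  subst ht₁ htb ha₀ ha₂
  have hsinh : sinh (γ * h) ≠ 0 := sinh_ne_zero.mpr (mul_ne_zero hγ hh.ne')
  set x := γ * h / 4 with hx
  have hγh : γ * h = 3 * x + x := by rw [hx]; ring
  have h₀ : γ * (t₀ - (t₀ + h / 4)) = -x := by rw [hx]; ring
  have h₁ : γ * (t₀ + h - (t₀ + h / 4)) = 3 * x := by rw [hx]; ring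
  have h₃ : (3 / 4 : ℝ) * γ * h = 3 * x := by rw [hx]; ring
  have h₄ : (1 / 4 : ℝ) * γ * h = x := by rw [hx]; ring
  rw [neg_mul, neg_mul, h₀, h₁, h₃, h₄, hγh, neg_neg]
  rw [hγh] at hsinh
  refine ⟨sinh_div_mul_exp_neg_add_sinh_div_mul_exp hsinh, ?_⟩
  rw [add_comm (3 * x)] at hsinh ⊢
  rw [add_comm]
  exact sinh_div_mul_exp_neg_add_sinh_div_mul_exp hsinh
end

section
/- For every real γ and every h > 0 with γh ≠ 0, |sinh((3/4)γh)/sinh(γh) − 3/4| ≤ C·γ²·h² and |sinh((1/4)γh)/sinh(γh) − 1/4| ≤ C·γ²·h², for an absolute constant C > 0, whenever |γh| ≤ 1. -/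
lemma sinh_sub_self_bound {y : ℝ} (hy : |y| ≤ 1) : |Real.sinh y - y| ≤ (2/9) * |y| ^ 3 := by
  have h1 := Real.exp_bound hy (n := 3) (by norm_num)
  have h2 := Real.exp_bound (x := -y) (by rwa [abs_neg]) (n := 3) (by norm_num)
  simp only [Finset.sum_range_succ, Finset.sum_range_zero] at h1 h2
  norm_num [Nat.factorial] at h1 h2
  rw [Real.sinh_eq]
  have key : (Real.exp y - Real.exp (-y)) / 2 - y
      = ((Real.exp y - (1 + y + y^2/2)) - (Real.exp (-y) - (1 + -y + y^2/2))) / 2 := by ring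
  rw [key, abs_div, abs_two]
  calc |Real.exp y - (1 + y + y^2/2) - (Real.exp (-y) - (1 + -y + y^2/2))| / 2
      ≤ (|Real.exp y - (1 + y + y^2/2)| + |Real.exp (-y) - (1 + -y + y^2/2)|) / 2 := by
        gcongr; exact abs_sub _ _
    _ ≤ (|y|^3 * (2/9) + |y|^3 * (2/9)) / 2 := by gcongr
    _ = (2/9) * |y|^3 := by ring

theorem nucc_mask_close_to_chaikin :
    ∃ C : ℝ, 0 < C ∧ ∀ γ h : ℝ, 0 < h → γ * h ≠ 0 → |γ * h| ≤ 1 →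
      |Real.sinh ((3 / 4) * γ * h) / Real.sinh (γ * h) - 3 / 4| ≤ C * γ ^ 2 * h ^ 2 ∧
      |Real.sinh ((1 / 4) * γ * h) / Real.sinh (γ * h) - 1 / 4| ≤ C * γ ^ 2 * h ^ 2 := by
  refine ⟨1, one_pos, fun γ h hh hne hle => ?_⟩
  set x := γ * h with hx
  have hxne : x ≠ 0 := hne
  have hxabs : 0 < |x| := abs_pos.mpr hxne
  have hsinh_ne : Real.sinh x ≠ 0 := by
    exact Real.sinh_ne_zero.mpr hxne
  have hsinh_ge : |x| ≤ |Real.sinh x| := by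
    rw [Real.abs_sinh]
    exact (Real.self_le_sinh_iff).mpr (abs_nonneg x)
  have main : ∀ a : ℝ, 0 < a → a ≤ 1 →
      |Real.sinh (a * x) / Real.sinh x - a| ≤ 1 * γ ^ 2 * h ^ 2 := by
    intro a ha ha1
    have hax : |a * x| ≤ 1 := by
      rw [abs_mul, abs_of_pos ha]
      calc a * |x| ≤ 1 * 1 := by
            apply mul_le_mul ha1 hle (abs_nonneg x) zero_le_one
        _ = 1 := by ring
    have b1 := sinh_sub_self_bound hax
    have b2 := sinh_sub_self_bound hle
    have hnum : |Real.sinh (a * x) - a * Real.sinh x| ≤ |x| ^ 3 := by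
      have : Real.sinh (a * x) - a * Real.sinh x
          = (Real.sinh (a * x) - a * x) - a * (Real.sinh x - x) := by ring
      rw [this]
      calc |(Real.sinh (a * x) - a * x) - a * (Real.sinh x - x)|
          ≤ |Real.sinh (a * x) - a * x| + |a * (Real.sinh x - x)| :=
            abs_sub (Real.sinh (a * x) - a * x) (a * (Real.sinh x - x))
        _ ≤ (2/9) * |a * x| ^ 3 + |a| * ((2/9) * |x| ^ 3) := by
            rw [abs_mul a]
            have h2' := mul_le_mul_of_nonneg_left b2 (abs_nonneg a)
            linarith
        _ ≤ (2/9) * |x| ^ 3 + 1 * ((2/9) * |x| ^ 3) := by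
            have haxle : |a * x| ≤ |x| := by
              rw [abs_mul, abs_of_pos ha]
              nlinarith [abs_nonneg x]
            have hax3 : |a * x| ^ 3 ≤ |x| ^ 3 :=
              pow_le_pow_left₀ (abs_nonneg _) haxle 3
            have ha' : |a| ≤ 1 := by rw [abs_of_pos ha]; exact ha1
            gcongr
        _ ≤ |x| ^ 3 := by nlinarith [abs_nonneg x, pow_nonneg (abs_nonneg x) 3]
    have heq : Real.sinh (a * x) / Real.sinh x - a
        = (Real.sinh (a * x) - a * Real.sinh x) / Real.sinh x := by
      field_simp
    rw [heq, abs_div]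
    have hx2 : 1 * γ ^ 2 * h ^ 2 = |x| ^ 2 := by
      rw [hx]; rw [← abs_pow]; rw [abs_of_nonneg (by positivity)]; ring
    rw [hx2]
    rw [div_le_iff₀ (lt_of_lt_of_le hxabs hsinh_ge)]
    calc |Real.sinh (a * x) - a * Real.sinh x| ≤ |x| ^ 3 := hnum
      _ = |x| ^ 2 * |x| := by ring
      _ ≤ |x| ^ 2 * |Real.sinh x| := by gcongr
  constructor
  · have := main (3/4) (by norm_num) (by norm_num)
    rw [show (3/4 : ℝ) * γ * h = (3/4) * x by rw [hx]; ring] at *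
    simpa using this
  · have := main (1/4) (by norm_num) (by norm_num)
    rw [show (1/4 : ℝ) * γ * h = (1/4) * x by rw [hx]; ring] at *
    simpa using this
end

section
/- Let M > 0. Suppose for each level k ∈ ℕ and each j ∈ ℤ, a mask a^{j,k} is given whose nonzero entries are of the form sinh((3/4)γ·2^{-k})/sinh(γ·2^{-k}) and sinh((1/4)γ·2^{-k})/sinh(γ·2^{-k}) with |γ| ≤ M. Then Σ_{k=0}^∞ sup_j Σ_n |a^{j,k}_n − a_n| < ∞, where a = {1/4, 3/4, 3/4, 1/4} is the Chaikin mask. -/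
noncomputable def chaikinMask : ℤ → ℝ := fun n =>
  if n = -2 then 1 / 4 else if n = -1 then 3 / 4 else
  if n = 0 then 3 / 4 else if n = 1 then 1 / 4 else 0

/-!
For `|x| ≤ 1` one has `|sinh x - x| ≤ x ^ 2`, hence `|sinh (c x) - c sinh x| ≤ 2 x ^ 2` when
`|c| ≤ 1`, while `|sinh x| ≥ |x|`. So a NUCC weight `sinh (c x) / sinh x` with `x = γ 2⁻ᵏ` differs
from the Chaikin weight `c` by at most `2 |x| ≤ 2 M 2⁻ᵏ`, uniformly in `j`, as soon as `M ≤ 2 ^ k`;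
the series is then dominated by a geometric one.
-/

open Real

theorem abs_sinh_sub_self_le {x : ℝ} (hx : |x| ≤ 1) : |sinh x - x| ≤ x ^ 2 := by
  have hpos := abs_exp_sub_one_sub_id_le hx
  have hneg := abs_exp_sub_one_sub_id_le (x := -x) (by rwa [abs_neg])
  rw [neg_sq] at hneg
  have htri := abs_sub (exp x - 1 - x) (exp (-x) - 1 - -x)
  rw [sinh_eq, show (exp x - exp (-x)) / 2 - x = ((exp x - 1 - x) - (exp (-x) - 1 - -x)) / 2 by
    ring, abs_div, abs_two]
  linarith

theorem abs_sinh_mul_div_sinh_sub_le {c x : ℝ} (hc : |c| ≤ 1) (hx₀ : x ≠ 0) (hx : |x| ≤ 1) :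
    |sinh (c * x) / sinh x - c| ≤ 2 * |x| := by
  have hc2 : c ^ 2 ≤ 1 := by nlinarith [sq_abs c, abs_nonneg c]
  have hcx : |c * x| ≤ 1 := by rw [abs_mul]; nlinarith [abs_nonneg c, abs_nonneg x]
  have hnum : |sinh (c * x) - c * sinh x| ≤ 2 * x ^ 2 := calc
    |sinh (c * x) - c * sinh x| = |(sinh (c * x) - c * x) - c * (sinh x - x)| := by ring_nf
    _ ≤ |sinh (c * x) - c * x| + |c| * |sinh x - x| := by rw [← abs_mul]; exact abs_sub _ _
    _ ≤ (c * x) ^ 2 + 1 * x ^ 2 := by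
      gcongr
      exacts [abs_sinh_sub_self_le hcx, abs_sinh_sub_self_le hx]
    _ ≤ 2 * x ^ 2 := by nlinarith [sq_nonneg x]
  have hden : |x| ≤ |sinh x| := by rw [abs_sinh]; exact self_le_sinh_iff.2 (abs_nonneg x)
  have hx' : 0 < |x| := abs_pos.2 hx₀
  have hsinh : sinh x ≠ 0 := abs_pos.1 (hx'.trans_le hden)
  rw [show sinh (c * x) / sinh x - c = (sinh (c * x) - c * sinh x) / sinh x by field_simp,
    abs_div, div_le_iff₀ (hx'.trans_le hden)]
  calc |sinh (c * x) - c * sinh x| ≤ 2 * |x| * |x| := by rwa [mul_assoc, ← sq, sq_abs]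
    _ ≤ 2 * |x| * |sinh x| := by gcongr

theorem abs_sinh_mul_div_sinh_dyadic_sub_le {c γ M : ℝ} {k : ℕ} (hc : |c| ≤ 1) (hγ₀ : γ ≠ 0)
    (hγ : |γ| ≤ M) (hk : M ≤ 2 ^ k) :
    |sinh (c * γ * 2 ^ (-(k : ℤ))) / sinh (γ * 2 ^ (-(k : ℤ))) - c| ≤ 2 * M * (1 / 2) ^ k := by
  have hx : |γ * (1 / 2) ^ k| ≤ M * (1 / 2) ^ k := by
    rw [abs_mul, abs_of_pos (by positivity : (0 : ℝ) < (1 / 2) ^ k)]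
    exact mul_le_mul_of_nonneg_right hγ (by positivity)
  have hMk : M * (1 / 2 : ℝ) ^ k ≤ 1 := by
    rw [one_div_pow, mul_one_div, div_le_one (by positivity)]
    exact hk
  rw [zpow_neg, zpow_natCast, ← inv_pow, ← one_div, mul_assoc]
  refine (abs_sinh_mul_div_sinh_sub_le hc (mul_ne_zero hγ₀ (by positivity)) (hx.trans hMk)).trans ?_
  linarith

theorem nucc_asymptotically_equivalent_to_chaikin_general
    (M : ℝ)
    (a : ℕ → ℤ → ℤ → ℝ) (γ₀ γ₁ : ℕ → ℤ → ℝ)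
    (hγ₀ : ∀ k j, γ₀ k j ≠ 0 ∧ |γ₀ k j| ≤ M)
    (hγ₁ : ∀ k j, γ₁ k j ≠ 0 ∧ |γ₁ k j| ≤ M)
    (ha₂ : ∀ k j, a k j (-2)
      = Real.sinh ((1 / 4) * γ₀ k j * 2 ^ (-(k : ℤ))) / Real.sinh (γ₀ k j * 2 ^ (-(k : ℤ))))
    (ha₀ : ∀ k j, a k j 0
      = Real.sinh ((3 / 4) * γ₀ k j * 2 ^ (-(k : ℤ))) / Real.sinh (γ₀ k j * 2 ^ (-(k : ℤ))))
    (ha₁' : ∀ k j, a k j (-1)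
      = Real.sinh ((3 / 4) * γ₁ k j * 2 ^ (-(k : ℤ))) / Real.sinh (γ₁ k j * 2 ^ (-(k : ℤ))))
    (ha₁ : ∀ k j, a k j 1
      = Real.sinh ((1 / 4) * γ₁ k j * 2 ^ (-(k : ℤ))) / Real.sinh (γ₁ k j * 2 ^ (-(k : ℤ)))) :
    Summable (fun k : ℕ =>
      ⨆ j : ℤ, ∑ n ∈ Finset.Icc (-2 : ℤ) 1, |a k j n - chaikinMask n|) := by
  refine (summable_geometric_two.mul_left (4 * (2 * M))).of_norm_bounded_eventually_nat ?_
  filter_upwards [(tendsto_pow_atTop_atTop_of_one_lt one_lt_two).eventually_ge_atTop M] with k hk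
  have hentry : ∀ j, ∀ n ∈ Finset.Icc (-2 : ℤ) 1,
      |a k j n - chaikinMask n| ≤ 2 * M * (1 / 2) ^ k := by
    intro j n hn
    have h₀ := fun c hc ↦ abs_sinh_mul_div_sinh_dyadic_sub_le (c := c) hc (hγ₀ k j).1 (hγ₀ k j).2 hk
    have h₁ := fun c hc ↦ abs_sinh_mul_div_sinh_dyadic_sub_le (c := c) hc (hγ₁ k j).1 (hγ₁ k j).2 hk
    obtain rfl | rfl | rfl | rfl : n = -2 ∨ n = -1 ∨ n = 0 ∨ n = 1 := by
      simp only [Finset.mem_Icc] at hn; omega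
    · rw [ha₂, show chaikinMask (-2) = 1 / 4 by norm_num [chaikinMask]]
      exact h₀ (1 / 4) (by norm_num [abs_of_pos])
    · rw [ha₁', show chaikinMask (-1) = 3 / 4 by norm_num [chaikinMask]]
      exact h₁ (3 / 4) (by norm_num [abs_of_pos])
    · rw [ha₀, show chaikinMask 0 = 3 / 4 by norm_num [chaikinMask]]
      exact h₀ (3 / 4) (by norm_num [abs_of_pos])
    · rw [ha₁, show chaikinMask 1 = 1 / 4 by norm_num [chaikinMask]]
      exact h₁ (1 / 4) (by norm_num [abs_of_pos])
  have hsum : ∀ j, ∑ n ∈ Finset.Icc (-2 : ℤ) 1, |a k j n - chaikinMask n|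
      ≤ 4 * (2 * M * (1 / 2) ^ k) :=
    fun j ↦ (Finset.sum_le_card_nsmul _ _ _ (hentry j)).trans_eq (by simp)
  rw [Real.norm_of_nonneg (Real.iSup_nonneg fun j ↦ Finset.sum_nonneg fun n _ ↦ abs_nonneg _)]
  exact (ciSup_le hsum).trans_eq (by ring)

theorem nucc_asymptotically_equivalent_to_chaikin
    (M : ℝ) (hM : 0 < M)
    (a : ℕ → ℤ → ℤ → ℝ) (γ₀ γ₁ : ℕ → ℤ → ℝ)
    (hγ₀ : ∀ k j, γ₀ k j ≠ 0 ∧ |γ₀ k j| ≤ M)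
    (hγ₁ : ∀ k j, γ₁ k j ≠ 0 ∧ |γ₁ k j| ≤ M)
    (ha₂ : ∀ k j, a k j (-2)
      = Real.sinh ((1 / 4) * γ₀ k j * 2 ^ (-(k : ℤ))) / Real.sinh (γ₀ k j * 2 ^ (-(k : ℤ))))
    (ha₀ : ∀ k j, a k j 0
      = Real.sinh ((3 / 4) * γ₀ k j * 2 ^ (-(k : ℤ))) / Real.sinh (γ₀ k j * 2 ^ (-(k : ℤ))))
    (ha₁' : ∀ k j, a k j (-1)
      = Real.sinh ((3 / 4) * γ₁ k j * 2 ^ (-(k : ℤ))) / Real.sinh (γ₁ k j * 2 ^ (-(k : ℤ))))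
    (ha₁ : ∀ k j, a k j 1
      = Real.sinh ((1 / 4) * γ₁ k j * 2 ^ (-(k : ℤ))) / Real.sinh (γ₁ k j * 2 ^ (-(k : ℤ))))
    (ha0 : ∀ k j n, n ∉ Finset.Icc (-2 : ℤ) 1 → a k j n = 0) :
    Summable (fun k : ℕ =>
      ⨆ j : ℤ, ∑ n ∈ Finset.Icc (-2 : ℤ) 1, |a k j n - chaikinMask n|) :=
  nucc_asymptotically_equivalent_to_chaikin_general M a γ₀ γ₁ hγ₀ hγ₁ ha₂ ha₀ ha₁' ha₁
end
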